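/- Let (a_n) be an arithmetic sequence, (e_n) an arithmetic-type sequence associated with (a_n), and let x ∈ t_{(e_n)}(𝕋) have canonical digits (c_n) with supp(x) cofinite in ℕ. Then the set B = supp(x) \ supp^q(x) = {n : 1 ≤ c_n ≤ q_n − 2} is infinite and q-divergent. -/

import Mathlib

/-!
Write `x = ∑ c_n / a_n` and `q_n = a_n / a_{n-1}`. Since `a_{n-1}` divides `a_k` for `k < n`,
`a_{n-1} x` equals `a_{n-1} ∑_{k ≥ n} c_k / a_k` in `𝕋`, and the canonical digit bound
`c_k ≤ q_k - 1` telescopes to put this number in `[c_n / q_n, (c_n + 1) / q_n]`. For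
`1 ≤ c_n ≤ q_n - 2` this interval stays at distance `≥ 1 / q_n` from the integers. Every `a_{n-1}`
is a term of `(e_n)`, so `a_{n-1} x → 0`, which forces `q_n → ∞` along `B`. That `B` is infinite
is immediate: `c_n < q_n - 1` infinitely often and `c_n = 0` only finitely often.
-/

open Filter Topology

noncomputable section

/-- The circle group `𝕋 = ℝ/ℤ`. -/
abbrev Circle1 : Type := AddCircle (1 : ℝ)

/-- An arithmetic sequence `(a_n)_{n ≥ 1}`, with the convention `a 0 = 1`:
a strictly increasing sequence of positive integers with `1 < a 1` and `a n ∣ a (n+1)`. -/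
def IsArithSeq (a : ℕ → ℕ) : Prop :=
  a 0 = 1 ∧ StrictMono a ∧ ∀ n, a n ∣ a (n + 1)

/-- The ratio sequence: `q n = a n / a (n-1)` (so `q 1 = a 1`). -/
def ratioSeq (a : ℕ → ℕ) (n : ℕ) : ℕ := a n / a (n - 1)

/-- The subgroup of `𝕋` characterized by a sequence of integers `(u n)`. -/
def charSub (u : ℕ → ℕ) : Set Circle1 :=
  {x : Circle1 | Tendsto (fun n => (u n) • x) atTop (nhds 0)}

/-- The set `{r·a_{k-1} : k ≥ 1, 1 ≤ r ≤ q_k - 1}` whose increasing enumeration is `(d_n)`. -/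
def DSet (a : ℕ → ℕ) : Set ℕ :=
  {m | ∃ k, 1 ≤ k ∧ ∃ r, 1 ≤ r ∧ r ≤ ratioSeq a k - 1 ∧ m = r * a (k - 1)}

/-- `(d_n)` is the strictly increasing enumeration of `DSet a`. -/
def IsDSeq (a d : ℕ → ℕ) : Prop := StrictMono d ∧ Set.range d = DSet a

/-- An arithmetic-type sequence associated with the arithmetic sequence `(a_n)`:
a strictly increasing sequence of positive integers whose set of values contains all the
values `a k` (for `k ≥ 1`) and is contained in `DSet a`. -/
def IsArithTypeSeq (a e : ℕ → ℕ) : Prop :=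
  StrictMono e ∧ (∀ k, 1 ≤ k → a k ∈ Set.range e) ∧ Set.range e ⊆ DSet a

/-- `(c_n)_{n ≥ 1}` is the canonical representation of `x ∈ 𝕋` w.r.t. the arithmetic
sequence `(a_n)`: `0 ≤ c n ≤ q n - 1` for all `n ≥ 1`, `c n < q n - 1` infinitely often,
and `x = Σ_{n ≥ 1} c n / a n` in `𝕋`. -/
def IsCanonicalRep (a c : ℕ → ℕ) (x : Circle1) : Prop :=
  (∀ n, 1 ≤ n → c n ≤ ratioSeq a n - 1) ∧
  {n | 1 ≤ n ∧ c n < ratioSeq a n - 1}.Infinite ∧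
  x = ((∑' n : ℕ, (c (n + 1) : ℝ) / (a (n + 1) : ℝ) : ℝ) : Circle1)

/-- The support of a digit sequence: `supp(x) = {n ≥ 1 : c n ≠ 0}`. -/
def suppOf (c : ℕ → ℕ) : Set ℕ := {n | 1 ≤ n ∧ c n ≠ 0}

namespace IsArithSeq

variable {a : ℕ → ℕ}

lemma pos (ha : IsArithSeq a) (n : ℕ) : 0 < a n := by
  have := ha.2.1.monotone (Nat.zero_le n)
  have := ha.1
  omega

lemma ratioSeq_mul (ha : IsArithSeq a) (n : ℕ) : ratioSeq a (n + 1) * a n = a (n + 1) :=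
  Nat.div_mul_cancel (ha.2.2 n)

lemma two_le_ratioSeq (ha : IsArithSeq a) (n : ℕ) : 2 ≤ ratioSeq a (n + 1) := by
  have hmul := ha.ratioSeq_mul n
  have hlt : a n < a (n + 1) := ha.2.1 n.lt_succ_self
  by_contra! h
  interval_cases h : ratioSeq a (n + 1) <;> omega

lemma dvd_of_le (ha : IsArithSeq a) {m n : ℕ} (h : m ≤ n) : a m ∣ a n := by
  induction n, h using Nat.le_induction with
  | base => rfl
  | succ n _ ih => exact ih.trans (ha.2.2 n)

end IsArithSeq

lemma coe_natCast_eq_zero (m : ℕ) : ((m : ℝ) : Circle1) = 0 :=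
  (AddCircle.coe_eq_zero_iff 1).2 ⟨m, by simp⟩

lemma le_norm_coe_of_mem_Icc {δ t : ℝ} (ht : t ∈ Set.Icc δ (1 - δ)) : δ ≤ ‖(t : Circle1)‖ := by
  rw [UnitAddCircle.norm_eq, le_abs]
  rcases le_or_gt (round t : ℝ) 0 with h | h
  · left; linarith [ht.1]
  · have : (1 : ℝ) ≤ round t := by exact_mod_cast Int.cast_pos.1 h
    right; linarith [ht.2]

def digitTerm (a c : ℕ → ℕ) (j : ℕ) : ℝ := c (j + 1) / a (j + 1)

section DigitSeries

variable {a c : ℕ → ℕ}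

lemma digitTerm_nonneg (j : ℕ) : 0 ≤ digitTerm a c j := by
  unfold digitTerm; positivity

lemma digitTerm_le (ha : IsArithSeq a) (hdig : ∀ n, 1 ≤ n → c n ≤ ratioSeq a n - 1) (j : ℕ) :
    digitTerm a c j ≤ 1 / a j - 1 / a (j + 1) := by
  have hq := ha.two_le_ratioSeq j
  have hc : (c (j + 1) : ℝ) ≤ ratioSeq a (j + 1) - 1 := by
    have := hdig (j + 1) j.succ_pos
    rw [le_sub_iff_add_le]
    exact_mod_cast (by omega : c (j + 1) + 1 ≤ ratioSeq a (j + 1))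
  have haj : (0 : ℝ) < a j := by exact_mod_cast ha.pos j
  have hmul : (a (j + 1) : ℝ) = ratioSeq a (j + 1) * a j := by
    exact_mod_cast (ha.ratioSeq_mul j).symm
  calc digitTerm a c j ≤ (ratioSeq a (j + 1) - 1) / a (j + 1) := by
        unfold digitTerm; gcongr
    _ = 1 / a j - 1 / a (j + 1) := by
        rw [hmul]; field_simp

lemma sum_range_digitTerm_le (ha : IsArithSeq a) (hdig : ∀ n, 1 ≤ n → c n ≤ ratioSeq a n - 1)
    (n N : ℕ) : ∑ i ∈ Finset.range N, digitTerm a c (i + n) ≤ 1 / a n := by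
  calc ∑ i ∈ Finset.range N, digitTerm a c (i + n)
      ≤ ∑ i ∈ Finset.range N, (1 / (a (i + n) : ℝ) - 1 / a (i + 1 + n)) := by
        gcongr with i
        rw [Nat.add_right_comm]
        exact digitTerm_le ha hdig (i + n)
    _ = 1 / a n - 1 / a (N + n) := by
        rw [Finset.sum_range_sub' (fun i => 1 / (a (i + n) : ℝ)), zero_add]
    _ ≤ 1 / a n := by
        have := ha.pos (N + n)
        simp only [sub_le_self_iff]
        positivity

lemma summable_digitTerm (ha : IsArithSeq a) (hdig : ∀ n, 1 ≤ n → c n ≤ ratioSeq a n - 1) :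
    Summable (digitTerm a c) :=
  summable_of_sum_range_le digitTerm_nonneg (sum_range_digitTerm_le ha hdig 0)

lemma tsum_digitTerm_tail_le (ha : IsArithSeq a) (hdig : ∀ n, 1 ≤ n → c n ≤ ratioSeq a n - 1)
    (n : ℕ) : ∑' j, digitTerm a c (j + n) ≤ 1 / a n :=
  Real.tsum_le_of_sum_range_le (fun _ => digitTerm_nonneg _) (sum_range_digitTerm_le ha hdig n)

lemma mul_tsum_digitTerm_tail_mem_Icc (ha : IsArithSeq a)
    (hdig : ∀ n, 1 ≤ n → c n ≤ ratioSeq a n - 1) (n : ℕ) :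
    a n * ∑' j, digitTerm a c (j + n) ∈
      Set.Icc ((c (n + 1) : ℝ) / ratioSeq a (n + 1)) ((c (n + 1) + 1) / ratioSeq a (n + 1)) := by
  have hsplit : ∑' j, digitTerm a c (j + n) =
      digitTerm a c n + ∑' j, digitTerm a c (j + (n + 1)) := by
    rw [((summable_nat_add_iff n).2 (summable_digitTerm ha hdig)).tsum_eq_zero_add, zero_add]
    simp only [add_assoc, add_comm 1 n]
  have han : (0 : ℝ) < a n := by exact_mod_cast ha.pos n
  have hq : (0 : ℝ) < ratioSeq a (n + 1) := by
    exact_mod_cast (ha.two_le_ratioSeq n).trans_lt' two_pos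
  have hmul : (a (n + 1) : ℝ) = ratioSeq a (n + 1) * a n := by
    exact_mod_cast (ha.ratioSeq_mul n).symm
  have hhead : a n * digitTerm a c n = c (n + 1) / ratioSeq a (n + 1) := by
    rw [digitTerm, hmul]; field_simp
  have htail : a n * ∑' j, digitTerm a c (j + (n + 1)) ≤ 1 / ratioSeq a (n + 1) := by
    calc a n * ∑' j, digitTerm a c (j + (n + 1)) ≤ a n * (1 / a (n + 1)) :=
          mul_le_mul_of_nonneg_left (tsum_digitTerm_tail_le ha hdig (n + 1)) han.le
      _ = 1 / ratioSeq a (n + 1) := by rw [hmul]; field_simp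
  have htail0 : 0 ≤ a n * ∑' j, digitTerm a c (j + (n + 1)) :=
    mul_nonneg han.le (tsum_nonneg fun _ => digitTerm_nonneg _)
  rw [hsplit, mul_add, hhead, add_div]
  exact ⟨le_add_of_nonneg_right htail0, by gcongr⟩

-- The first `n` terms of `a n • x` are integers, so only the tail from `n` survives in `𝕋`.
lemma nsmul_coe_tsum_digitTerm (ha : IsArithSeq a) (hdig : ∀ n, 1 ≤ n → c n ≤ ratioSeq a n - 1)
    (n : ℕ) : a n • ((∑' j, digitTerm a c j : ℝ) : Circle1) =
      ((a n * ∑' j, digitTerm a c (j + n) : ℝ) : Circle1) := by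
  have hhead : (a n : ℝ) * ∑ i ∈ Finset.range n, digitTerm a c i =
      ((∑ i ∈ Finset.range n, c (i + 1) * (a n / a (i + 1)) : ℕ) : ℝ) := by
    rw [Finset.mul_sum]
    push_cast
    refine Finset.sum_congr rfl fun i hi => ?_
    have hdvd := ha.dvd_of_le (Finset.mem_range.1 hi)
    rw [Nat.cast_div hdvd (by exact_mod_cast (ha.pos (i + 1)).ne'), digitTerm]
    ring
  rw [← AddCircle.coe_nsmul, nsmul_eq_mul, ← (summable_digitTerm ha hdig).sum_add_tsum_nat_add n,
    mul_add, AddCircle.coe_add, hhead, coe_natCast_eq_zero, zero_add]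

lemma inv_ratioSeq_le_norm_nsmul (ha : IsArithSeq a)
    (hdig : ∀ n, 1 ≤ n → c n ≤ ratioSeq a n - 1) {n : ℕ} (h1 : 1 ≤ c (n + 1))
    (h2 : c (n + 1) ≤ ratioSeq a (n + 1) - 2) :
    (ratioSeq a (n + 1) : ℝ)⁻¹ ≤ ‖a n • ((∑' j, digitTerm a c j : ℝ) : Circle1)‖ := by
  rw [nsmul_coe_tsum_digitTerm ha hdig]
  refine le_norm_coe_of_mem_Icc
    (Set.Icc_subset_Icc ?_ ?_ (mul_tsum_digitTerm_tail_mem_Icc ha hdig n))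
  all_goals
    have hq := ha.two_le_ratioSeq n
    have hq0 : (0 : ℝ) < ratioSeq a (n + 1) := by positivity
  · rw [inv_eq_one_div]
    gcongr
    exact_mod_cast h1
  · rw [div_le_iff₀ hq0, sub_mul, inv_mul_cancel₀ hq0.ne']
    have : (c (n + 1) : ℝ) + 2 ≤ ratioSeq a (n + 1) := by
      exact_mod_cast (by omega : c (n + 1) + 2 ≤ ratioSeq a (n + 1))
    linarith

end DigitSeries

lemma charSub_subset_of_isArithTypeSeq {a e : ℕ → ℕ} (ha : IsArithSeq a)
    (he : IsArithTypeSeq a e) : charSub e ⊆ charSub a := by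
  intro x hx
  choose m hm using fun k => he.2.1 (k + 1) k.succ_pos
  have hm_inj : m.Injective := fun i j hij => by
    simpa using ha.2.1.injective ((hm i).symm.trans ((congrArg e hij).trans (hm j)))
  have := hx.comp hm_inj.nat_tendsto_atTop
  simp only [Function.comp_def, hm] at this
  exact (tendsto_add_atTop_iff_nat 1).1 this

lemma tendsto_atTop_of_inv_le {α : Type*} {l : Filter α} {q : α → ℕ} {u : α → ℝ}
    (hu : Tendsto u l (𝓝 0)) (h : ∀ᶠ i in l, 0 < q i ∧ (q i : ℝ)⁻¹ ≤ u i) :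
    Tendsto q l atTop := by
  have hinv : Tendsto (fun i => (q i : ℝ)⁻¹) l (𝓝[>] 0) :=
    tendsto_nhdsWithin_iff.2 ⟨squeeze_zero' (.of_forall fun _ => by positivity)
      (h.mono fun _ hi => hi.2) hu, h.mono fun _ hi => by simpa using hi.1⟩
  have := hinv.inv_tendsto_nhdsGT_zero
  simp only [Pi.inv_def, inv_inv] at this
  exact tendsto_natCast_atTop_iff.1 this

/-- if `x ∈ t_{(e_n)}(𝕋)` has cofinite support, then
`B = supp(x) \ supp^q(x) = {n ≥ 1 : 1 ≤ c n ≤ q n - 2}` is infinite and `q`-divergent. -/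
theorem cofinite_support_structure (a e : ℕ → ℕ) (ha : IsArithSeq a)
    (he : IsArithTypeSeq a e) (x : Circle1) (hx : x ∈ charSub e) (c : ℕ → ℕ)
    (hc : IsCanonicalRep a c x) (hcof : ({n | 1 ≤ n} \ suppOf c).Finite) :
    letI B : Set ℕ := {n | 1 ≤ n ∧ 1 ≤ c n ∧ c n ≤ ratioSeq a n - 2}
    B.Infinite ∧ Tendsto (fun n => ratioSeq a n) (atTop ⊓ 𝓟 B) atTop := by
  obtain ⟨hdig, hinf, hX⟩ := hc
  refine ⟨(hinf.sdiff hcof).mono ?_, tendsto_atTop_of_inv_le (u := fun n => ‖a (n - 1) • x‖) ?_ ?_⟩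
  · rintro n ⟨⟨hn, hlt⟩, hsupp⟩
    have : c n ≠ 0 := fun h0 => hsupp ⟨hn, fun h => h.2 h0⟩
    exact ⟨hn, by omega, by omega⟩
  · have hax := tendsto_zero_iff_norm_tendsto_zero.1 (charSub_subset_of_isArithTypeSeq ha he hx)
    exact (hax.comp (tendsto_sub_atTop_nat 1)).mono_left inf_le_left
  · refine eventually_inf_principal.2 (.of_forall ?_)
    rintro _ ⟨hn, h1, h2⟩
    obtain ⟨n, rfl⟩ := Nat.exists_eq_add_of_le' hn
    refine ⟨by have := ha.two_le_ratioSeq n; omega, ?_⟩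
    rw [hX]
    exact inv_ratioSeq_le_norm_nsmul ha hdig h1 h2
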